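/- For two Hermitian positive definite matrices p₁, p₂ and any invertible matrix a, the geodesic is equivariant under congruence: a* η(p₁,p₂,t) a = η(a* p₁ a, a* p₂ a, t) for every t ∈ [0,1]. -/

import Mathlib

open Matrix
open scoped ComplexOrder Classical

/-- Matrix logarithm of a Hermitian (in particular HPD) matrix, via the spectral theorem. -/
noncomputable def mLog {d : ℕ} (A : Matrix (Fin d) (Fin d) ℂ) : Matrix (Fin d) (Fin d) ℂ :=
  if hA : A.IsHermitian then
    (hA.eigenvectorUnitary : Matrix (Fin d) (Fin d) ℂ) *
      Matrix.diagonal (fun i => (Real.log (hA.eigenvalues i) : ℂ)) *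
      (star hA.eigenvectorUnitary : Matrix (Fin d) (Fin d) ℂ)
  else 0

/-- Matrix exponential. -/
noncomputable def mExp {d : ℕ} (A : Matrix (Fin d) (Fin d) ℂ) : Matrix (Fin d) (Fin d) ℂ :=
  NormedSpace.exp A

/-- Hermitian positive (semi)definite square root. -/
noncomputable def msqrt {d : ℕ} (A : Matrix (Fin d) (Fin d) ℂ) : Matrix (Fin d) (Fin d) ℂ :=
  if hA : A.PosSemidef then
    hA.1.eigenvectorUnitary.1 * diagonal ((↑) ∘ (√·) ∘ hA.1.eigenvalues) *
      (star hA.1.eigenvectorUnitary.1)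
  else 1

/-- Frobenius norm. -/
noncomputable def frobNorm {d : ℕ} (A : Matrix (Fin d) (Fin d) ℂ) : ℝ :=
  Real.sqrt ((Aᴴ * A).trace.re)

/-- Affine-invariant Riemannian distance. -/
noncomputable def deltaR {d : ℕ} (p₁ p₂ : Matrix (Fin d) (Fin d) ℂ) : ℝ :=
  frobNorm (mLog ((msqrt p₁)⁻¹ * p₂ * (msqrt p₁)⁻¹))

/-- Real matrix power of an HPD matrix: `x^t = Exp (t • Log x)`. -/
noncomputable def mPow {d : ℕ} (A : Matrix (Fin d) (Fin d) ℂ) (t : ℝ) : Matrix (Fin d) (Fin d) ℂ :=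
  mExp ((t : ℂ) • mLog A)

/-- Riemannian logarithmic map at `p`. -/
noncomputable def logMap {d : ℕ} (p q : Matrix (Fin d) (Fin d) ℂ) : Matrix (Fin d) (Fin d) ℂ :=
  msqrt p * mLog ((msqrt p)⁻¹ * q * (msqrt p)⁻¹) * msqrt p

/-- Riemannian exponential map at `p`. -/
noncomputable def expMap {d : ℕ} (p h : Matrix (Fin d) (Fin d) ℂ) : Matrix (Fin d) (Fin d) ℂ :=
  msqrt p * mExp ((msqrt p)⁻¹ * h * (msqrt p)⁻¹) * msqrt p

/-- Affine-invariant geodesic from `p₁` to `p₂`. -/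
noncomputable def geo {d : ℕ} (p₁ p₂ : Matrix (Fin d) (Fin d) ℂ) (t : ℝ) :
    Matrix (Fin d) (Fin d) ℂ :=
  msqrt p₁ * mPow ((msqrt p₁)⁻¹ * p₂ * (msqrt p₁)⁻¹) t * msqrt p₁

/-!
Write `s = p₁^{1/2}` and `r = (a* p₁ a)^{1/2}`. Since `r² = a* s² a`, the matrix `u = r⁻¹ a* s` is
unitary, with `r u = a* s` and `u* r = s a`, and `r⁻¹ (a* p₂ a) r⁻¹ = u (s⁻¹ p₂ s⁻¹) u*`.
Conjugation by a unitary is a continuous ⋆-automorphism, so it commutes with `Log` (a continuous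
functional calculus) and with `Exp`, hence with real powers. Therefore
`η(a* p₁ a, a* p₂ a, t) = r u (s⁻¹ p₂ s⁻¹)^t u* r = a* s (s⁻¹ p₂ s⁻¹)^t s a = a* η(p₁, p₂, t) a`.
-/

section

variable {d : ℕ}

lemma msqrt_eq_cfc {A : Matrix (Fin d) (Fin d) ℂ} (hA : A.PosSemidef) :
    msqrt A = cfc Real.sqrt A := by
  rw [hA.1.cfc_eq, msqrt, dif_pos hA]
  rfl

lemma isHermitian_msqrt {A : Matrix (Fin d) (Fin d) ℂ} (hA : A.PosSemidef) :
    (msqrt A).IsHermitian := by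
  rw [msqrt_eq_cfc hA]
  exact cfc_predicate Real.sqrt A

lemma msqrt_mul_self {A : Matrix (Fin d) (Fin d) ℂ} (hA : A.PosSemidef) :
    msqrt A * msqrt A = A := by
  rw [msqrt_eq_cfc hA, ← cfc_mul Real.sqrt Real.sqrt A]
  conv_rhs => rw [← cfc_id' ℝ A (ha := hA.1)]
  refine cfc_congr fun x hx => Real.mul_self_sqrt ?_
  rw [hA.1.spectrum_real_eq_range_eigenvalues] at hx
  obtain ⟨i, rfl⟩ := hx
  exact hA.eigenvalues_nonneg i

lemma isUnit_msqrt {A : Matrix (Fin d) (Fin d) ℂ} (hA : A.PosDef) : IsUnit (msqrt A) :=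
  isUnit_of_mul_isUnit_left ((msqrt_mul_self hA.posSemidef).symm ▸ hA.isUnit)

lemma mLog_eq_cfc (A : Matrix (Fin d) (Fin d) ℂ) : mLog A = cfc Real.log A := by
  by_cases hA : A.IsHermitian
  · rw [hA.cfc_eq, mLog, dif_pos hA]
    rfl
  · rw [mLog, dif_neg hA]
    exact (cfc_apply_of_not_predicate A (show ¬ IsSelfAdjoint A from hA)).symm

lemma mLog_unitary_conj {u : Matrix (Fin d) (Fin d) ℂ}
    (hu : u ∈ unitary (Matrix (Fin d) (Fin d) ℂ)) (A : Matrix (Fin d) (Fin d) ℂ) :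
    mLog (u * A * star u) = u * mLog A * star u := by
  let φ := Unitary.conjStarAlgAut ℂ (Matrix (Fin d) (Fin d) ℂ) ⟨u, hu⟩
  have hφ : Continuous φ := (continuous_const.mul continuous_id).mul continuous_const
  change mLog (φ A) = φ (mLog A)
  rw [mLog_eq_cfc, mLog_eq_cfc]
  by_cases hA : IsSelfAdjoint A
  -- `log` is continuous on the spectrum because every function is continuous on a finite set
  · exact (StarAlgHomClass.map_cfc φ Real.log A (A.finite_real_spectrum.continuousOn _) hφ hA
      (hA.map φ)).symm
  · have hφA : ¬ IsSelfAdjoint (φ A) := fun h => hA (by simpa using h.map φ.symm)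
    rw [cfc_apply_of_not_predicate A hA, cfc_apply_of_not_predicate _ hφA, map_zero]

lemma mExp_unitary_conj {u : Matrix (Fin d) (Fin d) ℂ}
    (hu : u ∈ unitary (Matrix (Fin d) (Fin d) ℂ)) (A : Matrix (Fin d) (Fin d) ℂ) :
    mExp (u * A * star u) = u * mExp A * star u := by
  simpa [mExp] using exp_units_conj (Unitary.toUnits ⟨u, hu⟩) A

lemma mPow_unitary_conj {u : Matrix (Fin d) (Fin d) ℂ}
    (hu : u ∈ unitary (Matrix (Fin d) (Fin d) ℂ)) (A : Matrix (Fin d) (Fin d) ℂ) (t : ℝ) :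
    mPow (u * A * star u) t = u * mPow A t * star u := by
  rw [mPow, mPow, mLog_unitary_conj hu, ← Matrix.smul_mul, ← Matrix.mul_smul, mExp_unitary_conj hu]

end

namespace Matrix

variable {n R : Type*} [Fintype n] [DecidableEq n] [CommRing R] [StarRing R]
  {r s a : Matrix n n R}

lemma star_inv_mul_conjTranspose_mul (hr : r.IsHermitian) (hs : s.IsHermitian) :
    star (r⁻¹ * aᴴ * s) = s * a * r⁻¹ := by
  rw [star_eq_conjTranspose, conjTranspose_mul, conjTranspose_mul, conjTranspose_nonsing_inv,
    hr.eq, hs.eq, conjTranspose_conjTranspose, mul_assoc]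

lemma inv_mul_conjTranspose_mul_mem_unitary (hr : r.IsHermitian) (hs : s.IsHermitian)
    (hr₀ : IsUnit r.det) (h : r * r = aᴴ * (s * s) * a) :
    r⁻¹ * aᴴ * s ∈ unitary (Matrix n n R) := by
  rw [← unitaryGroup, mem_unitaryGroup_iff, star_inv_mul_conjTranspose_mul hr hs]
  calc r⁻¹ * aᴴ * s * (s * a * r⁻¹) = r⁻¹ * (aᴴ * (s * s) * a) * r⁻¹ := by
        simp only [mul_assoc]
    _ = 1 := by rw [← h, ← mul_assoc, nonsing_inv_mul _ hr₀, one_mul, mul_nonsing_inv _ hr₀]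

lemma inv_mul_conjTranspose_mul_conj (hr : r.IsHermitian) (hs : s.IsHermitian)
    (hs₀ : IsUnit s.det) (p : Matrix n n R) :
    r⁻¹ * aᴴ * s * (s⁻¹ * p * s⁻¹) * star (r⁻¹ * aᴴ * s) = r⁻¹ * (aᴴ * p * a) * r⁻¹ := by
  rw [star_inv_mul_conjTranspose_mul hr hs]
  simp only [mul_assoc, mul_nonsing_inv_cancel_left _ _ hs₀,
    nonsing_inv_mul_cancel_left _ _ hs₀]

lemma conjTranspose_mul_mul_eq_mul_conj_mul (hr : r.IsHermitian) (hs : s.IsHermitian)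
    (hr₀ : IsUnit r.det) (M : Matrix n n R) :
    aᴴ * (s * M * s) * a = r * (r⁻¹ * aᴴ * s * M * star (r⁻¹ * aᴴ * s)) * r := by
  rw [star_inv_mul_conjTranspose_mul hr hs]
  simp only [mul_assoc, mul_nonsing_inv_cancel_left _ _ hr₀]
  rw [← mul_assoc a, nonsing_inv_mul_cancel_right _ _ hr₀]

end Matrix

theorem geo_congruence_equivariant_general {d : ℕ} (p₁ p₂ a : Matrix (Fin d) (Fin d) ℂ)
    (hp₁ : p₁.PosDef) (ha : IsUnit a.det)
    (t : ℝ) :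
    aᴴ * geo p₁ p₂ t * a = geo (aᴴ * p₁ * a) (aᴴ * p₂ * a) t := by
  have hq : (aᴴ * p₁ * a).PosDef :=
    (IsUnit.posDef_star_left_conjugate_iff ((isUnit_iff_isUnit_det a).2 ha)).2 hp₁
  set s := msqrt p₁
  set r := msqrt (aᴴ * p₁ * a)
  have hs : s.IsHermitian := isHermitian_msqrt hp₁.posSemidef
  have hr : r.IsHermitian := isHermitian_msqrt hq.posSemidef
  have hs₀ : IsUnit s.det := (isUnit_iff_isUnit_det s).1 (isUnit_msqrt hp₁)
  have hr₀ : IsUnit r.det := (isUnit_iff_isUnit_det r).1 (isUnit_msqrt hq)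
  have hu : r⁻¹ * aᴴ * s ∈ unitary (Matrix (Fin d) (Fin d) ℂ) :=
    inv_mul_conjTranspose_mul_mem_unitary hr hs hr₀
      (by rw [msqrt_mul_self hq.posSemidef, msqrt_mul_self hp₁.posSemidef])
  show aᴴ * (s * mPow (s⁻¹ * p₂ * s⁻¹) t * s) * a =
    r * mPow (r⁻¹ * (aᴴ * p₂ * a) * r⁻¹) t * r
  rw [← inv_mul_conjTranspose_mul_conj hr hs hs₀, mPow_unitary_conj hu,
    conjTranspose_mul_mul_eq_mul_conj_mul hr hs hr₀]

theorem geo_congruence_equivariant {d : ℕ} (p₁ p₂ a : Matrix (Fin d) (Fin d) ℂ)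
    (hp₁ : p₁.PosDef) (hp₂ : p₂.PosDef) (ha : IsUnit a.det)
    (t : ℝ) (ht : t ∈ Set.Icc (0 : ℝ) 1) :
    aᴴ * geo p₁ p₂ t * a = geo (aᴴ * p₁ * a) (aᴴ * p₂ * a) t :=
  geo_congruence_equivariant_general p₁ p₂ a hp₁ ha t
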